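/- arXiv:2108.10491 — 4 statements merged into one kernel-verified Lean document; each statement's English description precedes it below -/
import Mathlib

section
/- Let h : [0,∞) → ℝ be continuously differentiable and I : [0,∞) → ℝ be Lebesgue integrable on every interval [0,T]. Suppose there exist constants α > 0 and λ > 0 such that (a) h'(t) − λ·I(t) ≥ −α·h(t) for all t ≥ 0, and (b) ∫₀^T e^{αt}·I(t) dt ≥ 0 for all T ≥ 0. Then h(t) ≥ h(0)·e^{−αt} for all t ≥ 0. -/
open MeasureTheory Real

/-!
Multiply by the integrating factor `e^{αt}`: the function `g t = e^{αt} h t` has derivative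
`e^{αt} (h' t + α h t) ≥ λ e^{αt} I t`, whose integral over `[0, T]` is nonnegative by (b).
Hence `g` is bounded below by `g 0 = h 0`.
-/

theorem le_of_hasDerivAt_of_le_of_integral_nonneg {f f' φ : ℝ → ℝ} {a b : ℝ} (hab : a ≤ b)
    (hf : ∀ x ∈ Set.uIcc a b, HasDerivAt f (f' x) x) (hf' : IntervalIntegrable f' volume a b)
    (hφ : IntervalIntegrable φ volume a b) (hle : ∀ x ∈ Set.Icc a b, φ x ≤ f' x)
    (hφ_nonneg : 0 ≤ ∫ x in a..b, φ x) : f a ≤ f b := by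
  have hmono : ∫ x in a..b, φ x ≤ ∫ x in a..b, f' x :=
    intervalIntegral.integral_mono_on hab hφ hf' hle
  rw [intervalIntegral.integral_eq_sub_of_hasDerivAt hf hf'] at hmono
  linarith

theorem hasDerivAt_exp_mul_mul {h : ℝ → ℝ} {h' : ℝ} (α x : ℝ) (hh : HasDerivAt h h' x) :
    HasDerivAt (fun s => exp (α * s) * h s) (exp (α * x) * (h' + α * h x)) x := by
  have he : HasDerivAt (fun s => exp (α * s)) (exp (α * x) * α) x :=
    ((hasDerivAt_id x).const_mul α).exp.congr_deriv (by simp)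
  exact (he.mul hh).congr_deriv (by ring)

theorem stmt_0_general (h I : ℝ → ℝ) (hc : ContDiff ℝ 1 h)
    (hI : ∀ T ≥ (0:ℝ), IntervalIntegrable I volume 0 T)
    (α lam : ℝ) (hlam : 0 < lam)
    (ha : ∀ t ≥ (0:ℝ), deriv h t - lam * I t ≥ -α * h t)
    (hb : ∀ T ≥ (0:ℝ), 0 ≤ ∫ t in (0:ℝ)..T, Real.exp (α * t) * I t) :
    ∀ t ≥ (0:ℝ), h t ≥ h 0 * Real.exp (-α * t) := by
  intro t ht
  have hderiv (s : ℝ) : HasDerivAt (fun s => exp (α * s) * h s)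
      (exp (α * s) * (deriv h s + α * h s)) s :=
    hasDerivAt_exp_mul_mul α s (hc.differentiable one_ne_zero s).hasDerivAt
  have hderiv_int : IntervalIntegrable (fun s => exp (α * s) * (deriv h s + α * h s)) volume 0 t :=
    have := hc.continuous_deriv le_rfl
    Continuous.intervalIntegrable (by fun_prop) 0 t
  have hweighted_int : IntervalIntegrable (fun s => lam * (exp (α * s) * I s)) volume 0 t :=
    ((hI t ht).continuousOn_mul (by fun_prop)).const_mul lam
  have hweighted_le (s : ℝ) (hs : s ∈ Set.Icc 0 t) :
      lam * (exp (α * s) * I s) ≤ exp (α * s) * (deriv h s + α * h s) := by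
    have := ha s hs.1
    rw [mul_left_comm]
    exact mul_le_mul_of_nonneg_left (by linarith) (exp_pos _).le
  have hweighted_nonneg : 0 ≤ ∫ s in (0:ℝ)..t, lam * (exp (α * s) * I s) := by
    rw [intervalIntegral.integral_const_mul]
    exact mul_nonneg hlam.le (hb t ht)
  have hg : h 0 ≤ exp (α * t) * h t := by
    simpa using le_of_hasDerivAt_of_le_of_integral_nonneg ht (fun s _ => hderiv s) hderiv_int
      hweighted_int hweighted_le hweighted_nonneg
  rw [ge_iff_le, neg_mul, exp_neg, ← div_eq_mul_inv, div_le_iff₀' (exp_pos _)]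
  exact hg

/-- Grönwall–Bellman variant (Lemma 1): if ḣ(t) − λ I(t) ≥ −α h(t) and
    ∫₀ᵀ e^{αt} I(t) dt ≥ 0 for all T ≥ 0, then h(t) ≥ h(0) e^{−αt}. -/
theorem stmt_0 (h I : ℝ → ℝ) (hc : ContDiff ℝ 1 h)
    (hI : ∀ T ≥ (0:ℝ), IntervalIntegrable I volume 0 T)
    (α lam : ℝ) (hα : 0 < α) (hlam : 0 < lam)
    (ha : ∀ t ≥ (0:ℝ), deriv h t - lam * I t ≥ -α * h t)
    (hb : ∀ T ≥ (0:ℝ), 0 ≤ ∫ t in (0:ℝ)..T, Real.exp (α * t) * I t) :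
    ∀ t ≥ (0:ℝ), h t ≥ h 0 * Real.exp (-α * t) :=
  stmt_0_general h I hc hI α lam hlam ha hb
end

section
/- Fix τ ∈ [0, τ̄] and α ≥ 0. For every ω ∈ ℝ, |e^{−(iω − α/2)τ} − 1| ≤ e^{ατ̄/2}·min(2, τ̄·√(ω² + α²/4)) , in particular the shifted delay perturbation Δ̃(jω) = Δ(jω − α/2) with Δ(s) = e^{−sτ} − 1 has magnitude bounded uniformly in τ ∈ [0, τ̄]. -/
/-!
For `z = -(iω - α/2)τ` one has `Re z = ατ/2 ≥ 0` and `|z| = τ √(ω² + α²/4)`. Since `|exp'| = e^{Re}`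
is at most `e^{Re z}` on the convex half-plane `Re w ≤ Re z`, which contains `0` and `z`, the mean
value inequality gives `|e^z - 1| ≤ |z| e^{Re z}`; trivially also `|e^z - 1| ≤ e^{Re z} + 1 ≤ 2 e^{Re z}`.
Both bounds are monotone in `τ ≤ τ̄`.
-/

namespace Complex

theorem norm_exp_sub_one_le_norm_mul_exp_re {z : ℂ} (hz : 0 ≤ z.re) :
    ‖exp z - 1‖ ≤ ‖z‖ * Real.exp z.re := by
  have h := (convex_halfSpace_re_le (r := z.re)).norm_image_sub_le_of_norm_deriv_le
    (f := exp) (C := Real.exp z.re) (fun w _ => differentiableAt_exp)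
    (fun w hw => by rw [deriv_exp, norm_exp]; exact Real.exp_le_exp.mpr hw)
    (show (0 : ℂ).re ≤ z.re from hz) (le_refl z.re)
  simpa [mul_comm] using h

theorem norm_exp_sub_one_le_two_mul_exp_re {z : ℂ} (hz : 0 ≤ z.re) :
    ‖exp z - 1‖ ≤ 2 * Real.exp z.re :=
  calc ‖exp z - 1‖ ≤ ‖exp z‖ + ‖(1 : ℂ)‖ := norm_sub_le _ _
    _ = Real.exp z.re + 1 := by rw [norm_exp, norm_one]
    _ ≤ 2 * Real.exp z.re := by linarith [Real.one_le_exp hz]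

theorem norm_exp_sub_one_le_exp_re_mul_min {z : ℂ} (hz : 0 ≤ z.re) :
    ‖exp z - 1‖ ≤ Real.exp z.re * min 2 ‖z‖ := by
  rw [mul_min_of_nonneg _ _ (Real.exp_nonneg _), mul_comm _ ‖z‖]
  exact le_min (by linarith [norm_exp_sub_one_le_two_mul_exp_re hz])
    (norm_exp_sub_one_le_norm_mul_exp_re hz)

theorem re_neg_I_mul_sub_half_mul (ω α τ : ℝ) : (-(I * ω - α / 2) * τ).re = α * τ / 2 := by
  simp only [mul_re, neg_re, sub_re, neg_im, sub_im, I_re, I_im, ofReal_re, ofReal_im,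
    div_ofNat_re, div_ofNat_im]
  ring

theorem norm_neg_I_mul_sub_half_mul {τ : ℝ} (hτ : 0 ≤ τ) (ω α : ℝ) :
    ‖-(I * ω - α / 2) * τ‖ = τ * Real.sqrt (ω ^ 2 + α ^ 2 / 4) := by
  rw [norm_mul, norm_real, Real.norm_of_nonneg hτ, mul_comm, norm_def, normSq_apply]
  congr 2
  simp only [neg_sub, sub_re, div_ofNat_re, ofReal_re, mul_re, I_re, zero_mul, I_im, ofReal_im,
    mul_zero, sub_self, sub_zero, sub_im, div_ofNat_im, zero_div, mul_im, one_mul, zero_add]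
  ring

end Complex

/-- Bound on the shifted delay perturbation Δ̃(jω) = e^{−(iω − α/2)τ} − 1,
    uniform over delays τ ∈ [0, τ̄]:
    |e^{−(iω − α/2)τ} − 1| ≤ e^{ατ̄/2} · min(2, τ̄ √(ω² + α²/4)). -/
theorem stmt_8 (τ τbar α : ℝ) (hτ : τ ∈ Set.Icc 0 τbar) (hα : 0 ≤ α) :
    ∀ ω : ℝ, ‖Complex.exp (-(Complex.I * ω - α / 2) * τ) - 1‖
      ≤ Real.exp (α * τbar / 2) *
        min 2 (τbar * Real.sqrt (ω ^ 2 + α ^ 2 / 4)) := by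
  intro ω
  obtain ⟨hτ0, hττbar⟩ := hτ
  have hre := Complex.re_neg_I_mul_sub_half_mul ω α τ
  have key := Complex.norm_exp_sub_one_le_exp_re_mul_min
    (z := -(Complex.I * ω - α / 2) * τ) (by rw [hre]; positivity)
  rw [hre, Complex.norm_neg_I_mul_sub_half_mul hτ0] at key
  exact key.trans (by gcongr)
end

section
/- Consider the uncertain system ẋ = f(x) + g(x)(u + w) with w = Δ(u), where Δ satisfies the time-domain α-IQC defined by a filter with state-space (A_F, B_F, C_F, D_F) and integrand I(x_F,u,w) := (C_F x_F + D_F u)ᵀ(C_F x_F + D_F u) − wᵀw. Suppose α, λ > 0 and the control u(t) = k_safe(x(t), x_F(t)) is chosen so that along every closed-loop trajectory (existing for all t ≥ 0): L_f h(x(t)) + L_g h(x(t))(u(t) + w(t)) − λ·I(x_F(t), u(t), w(t)) ≥ −α·h(x(t)) for all t ≥ 0 and all w ∈ ℝⁿʷ (in particular for w(t) = Δ(u)(t)). Then h(x(0)) ≥ 0 implies h(x(t)) ≥ 0 for all t ≥ 0. -/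
/-!
Multiplying the robust CBF inequality by `e^{α t}` shows that
`e^{α t} h(x(t)) - λ ∫₀ᵗ e^{α s} I(s) ds` has nonnegative derivative, hence is nondecreasing.
Comparing its values at `0` and `T` and using the α-IQC `∫₀ᵀ e^{α s} I(s) ds ≥ 0` gives
`h(x(T)) ≥ h(x(0)) e^{-α T}`.
-/

open Matrix MeasureTheory Set Real

section Primitive

variable {ψ : ℝ → ℝ} {a : ℝ}

lemma continuousOn_primitive_Ici (hψ : ContinuousOn ψ (Ici a)) :
    ContinuousOn (fun τ => ∫ s in a..τ, ψ s) (Ici a) := by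
  intro t ht
  have hle : a ≤ t + 1 := by linarith [mem_Ici.1 ht]
  have hprim := intervalIntegral.continuousOn_primitive_interval (μ := volume)
    ((hψ.mono (uIcc_of_le hle ▸ Icc_subset_Ici_self)).integrableOn_compact isCompact_uIcc)
  rw [uIcc_of_le hle, ← Ici_inter_Iic] at hprim
  exact (hprim t ⟨ht, by simp⟩).mono_of_mem_nhdsWithin
    (inter_mem_nhdsWithin _ (Iic_mem_nhds (lt_add_one t)))

lemma hasDerivAt_primitive_of_continuousOn_Ici (hψ : ContinuousOn ψ (Ici a)) {t : ℝ}
    (ht : a < t) : HasDerivAt (fun τ => ∫ s in a..τ, ψ s) (ψ t) t := by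
  have hint : IntervalIntegrable ψ volume a t :=
    (hψ.mono (uIcc_of_le ht.le ▸ Icc_subset_Ici_self)).intervalIntegrable
  have hIoi : ContinuousOn ψ (Ioi a) := hψ.mono Ioi_subset_Ici_self
  exact intervalIntegral.integral_hasDerivAt_right hint
    (hIoi.stronglyMeasurableAtFilter isOpen_Ioi t ht) (hIoi.continuousAt (Ioi_mem_nhds ht))

end Primitive

section Gronwall

variable {α lam : ℝ} {H H' φ : ℝ → ℝ}

lemma monotoneOn_exp_mul_sub_integral (hH : ∀ t ≥ 0, HasDerivAt H (H' t) t)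
    (hφ : ContinuousOn φ (Ici 0)) (hineq : ∀ t ≥ 0, -α * H t ≤ H' t - lam * φ t) :
    MonotoneOn (fun t => exp (α * t) * H t - lam * ∫ s in (0:ℝ)..t, exp (α * s) * φ s)
      (Ici 0) := by
  have hψ : ContinuousOn (fun s => exp (α * s) * φ s) (Ici 0) :=
    (continuous_exp.comp (continuous_const_mul α)).continuousOn.mul hφ
  have hexpH : ∀ t ≥ 0,
      HasDerivAt (fun t => exp (α * t) * H t) (exp (α * t) * (α * H t + H' t)) t := by
    intro t ht
    have he : HasDerivAt (fun s => exp (α * s)) (exp (α * t) * α) t := by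
      simpa using ((hasDerivAt_id t).const_mul α).exp
    exact (HasDerivAt.mul he (hH t ht)).congr_deriv (by ring)
  refine monotoneOn_of_deriv_nonneg (convex_Ici 0) ?_ ?_ ?_
  · exact ContinuousOn.sub (fun t ht => (hexpH t ht).continuousAt.continuousWithinAt)
      ((continuousOn_primitive_Ici hψ).const_smul lam)
  all_goals
    rw [interior_Ici]
    intro t ht
    have hK := (hexpH t (le_of_lt ht)).sub
      ((hasDerivAt_primitive_of_continuousOn_Ici hψ ht).const_mul lam)
  · exact hK.differentiableAt.differentiableWithinAt
  · refine le_of_le_of_eq ?_ hK.deriv.symm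
    rw [← mul_assoc, mul_comm lam, mul_assoc, ← mul_sub]
    have := hineq t (le_of_lt ht)
    exact mul_nonneg (exp_pos _).le (by linarith)

lemma mul_exp_neg_le_of_integral_exp_mul_nonneg (hlam : 0 ≤ lam)
    (hH : ∀ t ≥ 0, HasDerivAt H (H' t) t) (hφ : ContinuousOn φ (Ici 0))
    (hineq : ∀ t ≥ 0, -α * H t ≤ H' t - lam * φ t)
    (hiqc : ∀ T ≥ (0:ℝ), 0 ≤ ∫ t in (0:ℝ)..T, exp (α * t) * φ t) {T : ℝ} (hT : 0 ≤ T) :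
    H 0 * exp (-(α * T)) ≤ H T := by
  have hmono := monotoneOn_exp_mul_sub_integral hH hφ hineq self_mem_Ici hT hT
  simp only [mul_zero, exp_zero, one_mul, intervalIntegral.integral_same, sub_zero] at hmono
  rw [Real.exp_neg, mul_inv_le_iff₀ (exp_pos _), mul_comm]
  linarith [mul_nonneg hlam (hiqc T hT)]

end Gronwall

lemma continuous_iqc_integrand {m nF nz : ℕ} (CF : Matrix (Fin nz) (Fin nF) ℝ)
    (DF : Matrix (Fin nz) (Fin m) ℝ) :
    Continuous fun p : (Fin nF → ℝ) × (Fin m → ℝ) × (Fin m → ℝ) =>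
      (CF *ᵥ p.1 + DF *ᵥ p.2.1) ⬝ᵥ (CF *ᵥ p.1 + DF *ᵥ p.2.1) - p.2.2 ⬝ᵥ p.2.2 := by
  fun_prop

theorem stmt_12_general {n m nF nz : ℕ}
    (f : EuclideanSpace ℝ (Fin n) → EuclideanSpace ℝ (Fin n))
    (g : EuclideanSpace ℝ (Fin n) →
      ((Fin m → ℝ) →L[ℝ] EuclideanSpace ℝ (Fin n)))
    (h : EuclideanSpace ℝ (Fin n) → ℝ) (hh : ContDiff ℝ 1 h)
    (AF : Matrix (Fin nF) (Fin nF) ℝ) (BF : Matrix (Fin nF) (Fin m) ℝ)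
    (CF : Matrix (Fin nz) (Fin nF) ℝ) (DF : Matrix (Fin nz) (Fin m) ℝ)
    (I : (Fin nF → ℝ) → (Fin m → ℝ) → (Fin m → ℝ) → ℝ)
    (hI : I = fun xF u w =>
      (CF *ᵥ xF + DF *ᵥ u) ⬝ᵥ (CF *ᵥ xF + DF *ᵥ u) - w ⬝ᵥ w)
    (α lam : ℝ) (hlam : 0 < lam)
    (x : ℝ → EuclideanSpace ℝ (Fin n)) (xF : ℝ → (Fin nF → ℝ))
    (u w : ℝ → (Fin m → ℝ)) (hu : Continuous u) (hw : Continuous w)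
    (hdyn : ∀ t ≥ (0:ℝ), HasDerivAt x (f (x t) + g (x t) (u t + w t)) t)
    (hfilt : ∀ t ≥ (0:ℝ), HasDerivAt xF (AF *ᵥ xF t + BF *ᵥ u t) t)
    (hiqc : ∀ T ≥ (0:ℝ),
      0 ≤ ∫ t in (0:ℝ)..T, Real.exp (α * t) * I (xF t) (u t) (w t))
    (hrcbf : ∀ t ≥ (0:ℝ), ∀ w' : Fin m → ℝ,
      fderiv ℝ h (x t) (f (x t)) + fderiv ℝ h (x t) (g (x t) (u t + w'))
        - lam * I (xF t) (u t) w' ≥ -α * h (x t)) :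
    h (x 0) ≥ 0 → ∀ t ≥ (0:ℝ), h (x t) ≥ 0 := by
  intro h0 T hT
  have hxF : ContinuousOn xF (Ici 0) := fun t ht => (hfilt t ht).continuousAt.continuousWithinAt
  have hI_cont : ContinuousOn (fun t => I (xF t) (u t) (w t)) (Ici 0) := by
    have hcont := (continuous_iqc_integrand CF DF).comp_continuousOn
      (hxF.prodMk (hu.continuousOn.prodMk hw.continuousOn))
    subst hI
    exact hcont
  have hhx : ∀ t ≥ (0:ℝ), HasDerivAt (fun s => h (x s))
      (fderiv ℝ h (x t) (f (x t) + g (x t) (u t + w t))) t := fun t ht =>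
    ((hh.differentiable one_ne_zero (x t)).hasFDerivAt).comp_hasDerivAt t (hdyn t ht)
  have hineq : ∀ t ≥ (0:ℝ), -α * h (x t) ≤
      fderiv ℝ h (x t) (f (x t) + g (x t) (u t + w t)) - lam * I (xF t) (u t) (w t) := by
    intro t ht
    rw [map_add]
    exact hrcbf t ht (w t)
  exact (mul_nonneg h0 (exp_pos _).le).trans
    (mul_exp_neg_le_of_integral_exp_mul_nonneg hlam.le hhx hI_cont hineq hiqc hT)

/-- Robust CBF with α-IQC (Theorem 2): along closed-loop trajectories of the
    uncertain system ẋ = f(x) + g(x)(u + w) with filter state x_F driven by u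
    from x_F(0) = 0, if the robust CBF inequality holds for all w and the
    α-IQC guarantees ∫₀ᵀ e^{αt} I(x_F(t),u(t),w(t)) dt ≥ 0, then
    h(x(0)) ≥ 0 implies h(x(t)) ≥ 0 for all t ≥ 0. -/
theorem stmt_12 {n m nF nz : ℕ}
    (f : EuclideanSpace ℝ (Fin n) → EuclideanSpace ℝ (Fin n))
    (g : EuclideanSpace ℝ (Fin n) →
      ((Fin m → ℝ) →L[ℝ] EuclideanSpace ℝ (Fin n)))
    (h : EuclideanSpace ℝ (Fin n) → ℝ) (hh : ContDiff ℝ 1 h)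
    (AF : Matrix (Fin nF) (Fin nF) ℝ) (BF : Matrix (Fin nF) (Fin m) ℝ)
    (CF : Matrix (Fin nz) (Fin nF) ℝ) (DF : Matrix (Fin nz) (Fin m) ℝ)
    (I : (Fin nF → ℝ) → (Fin m → ℝ) → (Fin m → ℝ) → ℝ)
    (hI : I = fun xF u w =>
      (CF *ᵥ xF + DF *ᵥ u) ⬝ᵥ (CF *ᵥ xF + DF *ᵥ u) - w ⬝ᵥ w)
    (α lam : ℝ) (hα : 0 < α) (hlam : 0 < lam)
    (x : ℝ → EuclideanSpace ℝ (Fin n)) (xF : ℝ → (Fin nF → ℝ))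
    (u w : ℝ → (Fin m → ℝ)) (hu : Continuous u) (hw : Continuous w)
    (hdyn : ∀ t ≥ (0:ℝ), HasDerivAt x (f (x t) + g (x t) (u t + w t)) t)
    (hfilt : ∀ t ≥ (0:ℝ), HasDerivAt xF (AF *ᵥ xF t + BF *ᵥ u t) t)
    (hic : xF 0 = 0)
    (hiqc : ∀ T ≥ (0:ℝ),
      0 ≤ ∫ t in (0:ℝ)..T, Real.exp (α * t) * I (xF t) (u t) (w t))
    (hrcbf : ∀ t ≥ (0:ℝ), ∀ w' : Fin m → ℝ,
      fderiv ℝ h (x t) (f (x t)) + fderiv ℝ h (x t) (g (x t) (u t + w'))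
        - lam * I (xF t) (u t) w' ≥ -α * h (x t)) :
    h (x 0) ≥ 0 → ∀ t ≥ (0:ℝ), h (x t) ≥ 0 :=
  stmt_12_general f g h hh AF BF CF DF I hI α lam hlam x xF u w hu hw hdyn hfilt hiqc hrcbf
end

section
/- Let h : [0,∞) → ℝ be twice continuously differentiable with h(0) ≥ 0 and ḣ(0) + α·h(0) ≥ 0, let I : [0,∞) → ℝ be locally integrable with ∫₀^T e^{αt}I(t)dt ≥ 0 for all T ≥ 0, and suppose ḧ(t) + 2α·ḣ(t) + α²·h(t) ≥ λ·I(t) for all t ≥ 0, where α, λ > 0. Then h(t) ≥ 0 for all t ≥ 0. -/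
open MeasureTheory

/-! Multiplying by the integrating factor `e^{αt}` turns `u' + αu ≥ J` into
`(e^{αt} u)' ≥ e^{αt} J`, so `e^{αT} u(T) ≥ u(0) + ∫₀ᵀ e^{αs} J(s) ds ≥ 0` whenever the weighted
forcing integrals are nonnegative. Applying this first to `u = ḣ + αh` with `J = λI`, and then to
`u = h` with `J = 0`, gives the cascade `ḣ + αh ≥ 0` and `h ≥ 0`. -/

theorem hasDerivAt_exp_mul_mul_s14 {u : ℝ → ℝ} {u' α t : ℝ} (hu : HasDerivAt u u' t) :
    HasDerivAt (fun s => Real.exp (α * s) * u s) (Real.exp (α * t) * (u' + α * u t)) t := by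
  have hexp : HasDerivAt (fun s => Real.exp (α * s)) (Real.exp (α * t) * α) t :=
    ((hasDerivAt_id t).const_mul α).exp.congr_deriv (by simp)
  exact (hexp.mul hu).congr_deriv (by ring)

theorem nonneg_of_forcing_le_deriv_add_mul {u u' J : ℝ → ℝ} {α T : ℝ} (hT : 0 ≤ T)
    (hu : ∀ t, HasDerivAt u (u' t) t) (hu' : Continuous u')
    (hJ : IntervalIntegrable J volume 0 T) (hle : ∀ t ∈ Set.Icc 0 T, J t ≤ u' t + α * u t)
    (hforcing : 0 ≤ ∫ t in (0:ℝ)..T, Real.exp (α * t) * J t) (hu0 : 0 ≤ u 0) :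
    0 ≤ u T := by
  have hexp : Continuous fun t => Real.exp (α * t) := by fun_prop
  have hcont : Continuous fun t => Real.exp (α * t) * (u' t + α * u t) :=
    hexp.mul (hu'.add (continuous_const.mul (continuous_iff_continuousAt.2 fun t =>
      (hu t).continuousAt)))
  have hftc : ∫ t in (0:ℝ)..T, Real.exp (α * t) * (u' t + α * u t)
      = Real.exp (α * T) * u T - u 0 := by
    rw [intervalIntegral.integral_eq_sub_of_hasDerivAt (fun t _ => hasDerivAt_exp_mul_mul_s14 (hu t))
      (hcont.intervalIntegrable 0 T)]
    simp
  have hmono : ∫ t in (0:ℝ)..T, Real.exp (α * t) * J t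
      ≤ ∫ t in (0:ℝ)..T, Real.exp (α * t) * (u' t + α * u t) :=
    intervalIntegral.integral_mono_on hT (hJ.continuousOn_mul hexp.continuousOn)
      (hcont.intervalIntegrable 0 T) fun t ht =>
        mul_le_mul_of_nonneg_left (hle t ht) (Real.exp_pos _).le
  have hweighted : 0 ≤ Real.exp (α * T) * u T := by linarith
  exact nonneg_of_mul_nonneg_right hweighted (Real.exp_pos _)

theorem stmt_14_general (h I : ℝ → ℝ) (hc : ContDiff ℝ 2 h)
    (hI : ∀ T ≥ (0:ℝ), IntervalIntegrable I volume 0 T)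
    (α lam : ℝ) (hlam : 0 < lam)
    (h0 : h 0 ≥ 0) (hd0 : deriv h 0 + α * h 0 ≥ 0)
    (hiqc : ∀ T ≥ (0:ℝ), 0 ≤ ∫ t in (0:ℝ)..T, Real.exp (α * t) * I t)
    (ha : ∀ t ≥ (0:ℝ),
      deriv (deriv h) t + 2 * α * deriv h t + α ^ 2 * h t ≥ lam * I t) :
    ∀ t ≥ (0:ℝ), h t ≥ 0 := by
  have hd : Differentiable ℝ h := hc.differentiable (by norm_num)
  have hc1 : ContDiff ℝ 1 (deriv h) := (contDiff_succ_iff_deriv (n := 1)).mp hc |>.2.2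
  have hdd : Differentiable ℝ (deriv h) := hc1.differentiable one_ne_zero
  have hcascade : ∀ T ≥ (0:ℝ), 0 ≤ deriv h T + α * h T := fun T hT =>
    nonneg_of_forcing_le_deriv_add_mul (u := fun t => deriv h t + α * h t) (α := α)
      (J := fun t => lam * I t)
      hT (fun t => (hdd t).hasDerivAt.add ((hd t).hasDerivAt.const_mul α))
      ((hc1.continuous_deriv le_rfl).add (continuous_const.mul hdd.continuous))
      ((hI T hT).const_mul lam) (fun t ht => by linarith [ha t ht.1])
      (by simpa only [mul_left_comm, intervalIntegral.integral_const_mul] using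
        mul_nonneg hlam.le (hiqc T hT))
      hd0
  exact fun T hT => nonneg_of_forcing_le_deriv_add_mul (J := 0) hT (fun t => (hd t).hasDerivAt)
    hdd.continuous intervalIntegrable_const (fun t ht => by simpa using hcascade t ht.1)
    (by simp) h0

/-- Exponential CBF cascade combined with the α-IQC Grönwall variant:
    if h(0) ≥ 0, ḣ(0) + αh(0) ≥ 0, ∫₀ᵀ e^{αt}I(t)dt ≥ 0 for all T ≥ 0,
    and ḧ(t) + 2αḣ(t) + α²h(t) ≥ λI(t) for all t ≥ 0, then h(t) ≥ 0. -/
theorem stmt_14 (h I : ℝ → ℝ) (hc : ContDiff ℝ 2 h)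
    (hI : ∀ T ≥ (0:ℝ), IntervalIntegrable I volume 0 T)
    (α lam : ℝ) (hα : 0 < α) (hlam : 0 < lam)
    (h0 : h 0 ≥ 0) (hd0 : deriv h 0 + α * h 0 ≥ 0)
    (hiqc : ∀ T ≥ (0:ℝ), 0 ≤ ∫ t in (0:ℝ)..T, Real.exp (α * t) * I t)
    (ha : ∀ t ≥ (0:ℝ),
      deriv (deriv h) t + 2 * α * deriv h t + α ^ 2 * h t ≥ lam * I t) :
    ∀ t ≥ (0:ℝ), h t ≥ 0 :=
  stmt_14_general h I hc hI α lam hlam h0 hd0 hiqc ha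
end
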